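/- Let ℓ be a closed walk in G based at a vertex v. Then ℓ has weight less than or equal to the weight of every closed walk in G based at v with signature equal to sig(ℓ), if and only if for every h ∈ A the unique lift of ℓ starting at (v,h) in the Z₂-homology cover Ḡ has weight less than or equal to the weight of every walk in Ḡ from (v,h) to (v, h + sig(ℓ)). -/

import Mathlib

/-- The `Z₂`-homology cover of `G`: the simple graph on `V × (Fin β → ZMod 2)` in which
`(u, h)` and `(v, h')` are adjacent iff `u` and `v` are adjacent in `G` and
`h' = h + σ u v`. -/
def HomologyCover (β : ℕ) {V : Type*} (G : SimpleGraph V)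
    (σ : V → V → (Fin β → ZMod 2)) (hσ : ∀ u v, σ u v = σ v u) :
    SimpleGraph (V × (Fin β → ZMod 2)) where
  Adj x y := G.Adj x.1 y.1 ∧ y.2 = x.2 + σ x.1 y.1
  symm := ⟨by
    rintro ⟨u, h⟩ ⟨v, h'⟩ ⟨hadj, heq⟩
    refine ⟨hadj.symm, ?_⟩
    simp only at heq ⊢
    subst heq
    rw [hσ v u]
    funext i
    simp only [Pi.add_apply]
    rw [add_assoc, CharTwo.add_self_eq_zero, add_zero]⟩
  loopless := ⟨fun x hx => G.loopless.irrefl x.1 hx.1⟩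

/-- The covering projection `π (v, h) = v`, as a graph homomorphism from the
`Z₂`-homology cover of `G` to `G`. -/
def homologyProj (β : ℕ) {V : Type*} (G : SimpleGraph V)
    (σ : V → V → (Fin β → ZMod 2)) (hσ : ∀ u v, σ u v = σ v u) :
    HomologyCover β G σ hσ →g G where
  toFun := Prod.fst
  map_rel' := fun hadj => And.left hadj

/-- The signature of a walk: the sum of `σ x y` over the darts `(x, y)` traversed by the
walk, with multiplicity. -/
def walkSig {β : ℕ} {V : Type*} {G : SimpleGraph V} (σ : V → V → (Fin β → ZMod 2))
    {u v : V} (p : G.Walk u v) : Fin β → ZMod 2 :=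
  (p.darts.map fun d => σ d.toProd.1 d.toProd.2).sum

/-- The weight of a walk: the sum of `w x y` over the darts `(x, y)` traversed by the
walk, with multiplicity. -/
def walkWeight {V : Type*} {G : SimpleGraph V} (w : V → V → ℝ)
    {u v : V} (p : G.Walk u v) : ℝ :=
  (p.darts.map fun d => w d.toProd.1 d.toProd.2).sum

open SimpleGraph

/- A walk in the cover is determined by its start and its projection, and the signature of the
projection is the total change of the `A`-coordinate. Hence the walks from `(v, h)` to
`(v, h + sig ℓ)` are exactly the lifts of the closed walks at `v` with signature `sig ℓ`, and
projecting preserves weight. -/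

theorem walkWeight_map {V W : Type*} {G : SimpleGraph V} {H : SimpleGraph W} (f : G →g H)
    (w : W → W → ℝ) {u v : V} (p : G.Walk u v) :
    walkWeight w (p.map f) = walkWeight (fun x y => w (f x) (f y)) p := by
  simp only [walkWeight, Walk.darts_map, List.map_map]
  rfl

theorem walkWeight_copy {V : Type*} {G : SimpleGraph V} (w : V → V → ℝ) {u v u' v' : V}
    (p : G.Walk u v) (hu : u = u') (hv : v = v') :
    walkWeight w (p.copy hu hv) = walkWeight w p := by
  subst hu hv
  rfl

section HomologyCover

variable {β : ℕ} {V : Type*} {G : SimpleGraph V}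
  {σ : V → V → (Fin β → ZMod 2)} {hσ : ∀ u v, σ u v = σ v u}

@[simp]
theorem walkSig_nil {u : V} : walkSig σ (Walk.nil : G.Walk u u) = 0 := rfl

@[simp]
theorem walkSig_cons {a b c : V} (e : G.Adj a b) (p : G.Walk b c) :
    walkSig σ (Walk.cons e p) = σ a b + walkSig σ p := rfl

theorem snd_eq_add_walkSig_map_homologyProj {x y : V × (Fin β → ZMod 2)}
    (q : (HomologyCover β G σ hσ).Walk x y) :
    y.2 = x.2 + walkSig σ (q.map (homologyProj β G σ hσ)) := by
  induction q with
  | nil => simp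
  | cons e q ih =>
    rw [Walk.map_cons, walkSig_cons, ih, e.2, add_assoc]
    rfl

theorem walkWeight_of_map_homologyProj_eq (w : V → V → ℝ) {x y : V × (Fin β → ZMod 2)}
    {q : (HomologyCover β G σ hσ).Walk x y} {p : G.Walk x.1 y.1}
    (hq : q.map (homologyProj β G σ hσ) = p) :
    walkWeight (fun x y => w x.1 y.1) q = walkWeight w p := by
  subst hq
  exact (walkWeight_map (homologyProj β G σ hσ) w q).symm

theorem exists_map_homologyProj_eq {u v : V} (p : G.Walk u v) (h : Fin β → ZMod 2) :
    ∃ q : (HomologyCover β G σ hσ).Walk (u, h) (v, h + walkSig σ p),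
      q.map (homologyProj β G σ hσ) = p := by
  induction p generalizing h with
  | nil => exact ⟨Walk.nil.copy rfl (by simp), by simp only [Walk.map_copy, Walk.map_nil]; rfl⟩
  | @cons a b c e p ih =>
    obtain ⟨q, hq⟩ := ih (h + σ a b)
    have e' : (HomologyCover β G σ hσ).Adj (a, h) (b, h + σ a b) := ⟨e, rfl⟩
    refine ⟨(Walk.cons e' q).copy rfl (by rw [walkSig_cons, add_assoc]), ?_⟩
    simp only [Walk.map_copy, Walk.map_cons, hq]
    rfl

end HomologyCover

theorem minimal_loop_iff_lifts_shortest_general (β : ℕ) {V : Type*} (G : SimpleGraph V)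
    (σ : V → V → (Fin β → ZMod 2)) (hσ : ∀ u v, σ u v = σ v u)
    (w : V → V → ℝ)
    (v : V) (ℓ : G.Walk v v) :
    (∀ ℓ' : G.Walk v v, walkSig σ ℓ' = walkSig σ ℓ →
        walkWeight w ℓ ≤ walkWeight w ℓ') ↔
    (∀ (h : Fin β → ZMod 2)
        (q : (HomologyCover β G σ hσ).Walk (v, h) (v, h + walkSig σ ℓ)),
        q.map (homologyProj β G σ hσ) = ℓ →
        ∀ q' : (HomologyCover β G σ hσ).Walk (v, h) (v, h + walkSig σ ℓ),
          walkWeight (fun x y => w x.1 y.1) q ≤ walkWeight (fun x y => w x.1 y.1) q') := by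
  constructor
  · intro hmin h q hq q'
    have hsig : walkSig σ (q'.map (homologyProj β G σ hσ)) = walkSig σ ℓ :=
      (add_left_cancel (snd_eq_add_walkSig_map_homologyProj q')).symm
    rw [walkWeight_of_map_homologyProj_eq w hq, walkWeight_of_map_homologyProj_eq w rfl]
    exact hmin _ hsig
  · intro hlift ℓ' hsig
    obtain ⟨q, hq⟩ := exists_map_homologyProj_eq (hσ := hσ) ℓ 0
    obtain ⟨q', hq'⟩ := exists_map_homologyProj_eq (hσ := hσ) ℓ' 0
    have hle := hlift 0 q hq (q'.copy rfl (by rw [hsig]))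
    rwa [walkWeight_copy, walkWeight_of_map_homologyProj_eq w hq,
      walkWeight_of_map_homologyProj_eq w hq'] at hle

/-- A closed walk `ℓ` based at `v` has weight at most that of every closed walk based at
`v` with the same signature, if and only if for every `h` the lift of `ℓ` starting at
`(v, h)` has weight at most that of every walk in the `Z₂`-homology cover from `(v, h)`
to `(v, h + sig ℓ)`. -/
theorem minimal_loop_iff_lifts_shortest (β : ℕ) {V : Type*} (G : SimpleGraph V)
    (σ : V → V → (Fin β → ZMod 2)) (hσ : ∀ u v, σ u v = σ v u)
    (w : V → V → ℝ) (hw : ∀ x y, w x y = w y x)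
    (v : V) (ℓ : G.Walk v v) :
    (∀ ℓ' : G.Walk v v, walkSig σ ℓ' = walkSig σ ℓ →
        walkWeight w ℓ ≤ walkWeight w ℓ') ↔
    (∀ (h : Fin β → ZMod 2)
        (q : (HomologyCover β G σ hσ).Walk (v, h) (v, h + walkSig σ ℓ)),
        q.map (homologyProj β G σ hσ) = ℓ →
        ∀ q' : (HomologyCover β G σ hσ).Walk (v, h) (v, h + walkSig σ ℓ),
          walkWeight (fun x y => w x.1 y.1) q ≤ walkWeight (fun x y => w x.1 y.1) q') :=
  minimal_loop_iff_lifts_shortest_general β G σ hσ w v ℓ
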